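/- For any positive integer a, ∫_{-∞}^{∞} τ(a, e^u, 2e^u)² du ≤ 4·(log 2)·W(a), where τ(a,y,z) counts divisors of a in (y,z] and W(a) counts pairs of divisors (d,d') of a with |log(d/d')| ≤ log 2. -/

import Mathlib

/-!
A divisor `d` of `a` is counted by `τ(a, e^u, 2e^u)` exactly when `u ∈ [log d - log 2, log d)`.
Expanding the square, the integral becomes the sum over pairs of divisors of the length of the
overlap of their two intervals; that overlap has length at most `log 2` and is empty unless
`|log d - log d'| ≤ log 2`. This gives the bound with `log 2` in place of `4 log 2`.
-/

open MeasureTheory Real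

noncomputable def tauI (a : ℕ) (y z : ℝ) : ℕ :=
  Set.ncard {d : ℕ | d ∣ a ∧ y < (d : ℝ) ∧ (d : ℝ) ≤ z}

noncomputable def W (a : ℕ) : ℕ :=
  Set.ncard {p : ℕ × ℕ | p.1 ∣ a ∧ p.2 ∣ a ∧ |Real.log p.1 - Real.log p.2| ≤ Real.log 2}

open Finset

section IntervalOverlaps

variable {ι : Type*} (s : Finset ι)

theorem sq_card_filter_mem_eq_sum_indicator (A : ι → Set ℝ) (u : ℝ) [DecidablePred (u ∈ A ·)] :
    (#{i ∈ s | u ∈ A i} : ℝ) ^ 2 = ∑ p ∈ s ×ˢ s, (A p.1 ∩ A p.2).indicator 1 u := by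
  have hcard : (#{i ∈ s | u ∈ A i} : ℝ) = ∑ i ∈ s, (A i).indicator 1 u := by
    simp only [natCast_card_filter, Set.indicator_apply, Pi.one_apply]
  simp only [hcard, sq, sum_mul_sum, sum_product, Set.inter_indicator_one, Pi.mul_apply]

theorem integral_sq_card_filter_mem {A : ι → Set ℝ} (hA : ∀ i, MeasurableSet (A i))
    (hA_fin : ∀ i, volume (A i) ≠ ⊤) [∀ u, DecidablePred (u ∈ A ·)] :
    ∫ u, (#{i ∈ s | u ∈ A i} : ℝ) ^ 2 = ∑ p ∈ s ×ˢ s, volume.real (A p.1 ∩ A p.2) := by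
  have hmeas : ∀ p : ι × ι, MeasurableSet (A p.1 ∩ A p.2) := fun p => (hA _).inter (hA _)
  simp_rw [sq_card_filter_mem_eq_sum_indicator]
  rw [integral_finsetSum]
  · exact sum_congr rfl fun p _ => integral_indicator_one (hmeas p)
  · intro p _
    refine (integrable_indicator_iff (hmeas p)).mpr (integrableOn_const ?_)
    exact ne_top_of_le_ne_top (hA_fin p.1) (measure_mono Set.inter_subset_left)

theorem volume_real_Ico_inter_Ico_le (x y c : ℝ) :
    volume.real (Set.Ico (x - c) x ∩ Set.Ico (y - c) y) ≤ if |x - y| ≤ c then c else 0 := by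
  rw [Set.Ico_inter_Ico, Real.volume_real_Ico]
  split_ifs with h
  · have : 0 ≤ c := (abs_nonneg _).trans h
    refine max_le ?_ this
    linarith [inf_le_left (a := x) (b := y), le_sup_left (a := x - c) (b := y - c)]
  · refine max_le ?_ le_rfl
    rcases lt_abs.mp (not_le.mp h) with h' | h'
    · linarith [inf_le_right (a := x) (b := y), le_sup_left (a := x - c) (b := y - c)]
    · linarith [inf_le_left (a := x) (b := y), le_sup_right (a := x - c) (b := y - c)]

theorem integral_sq_card_filter_mem_Ico_le (x : ι → ℝ) (c : ℝ) :
    ∫ u, (#{i ∈ s | u ∈ Set.Ico (x i - c) (x i)} : ℝ) ^ 2 ≤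
      c * #{p ∈ s ×ˢ s | |x p.1 - x p.2| ≤ c} := by
  rw [integral_sq_card_filter_mem s (fun _ => measurableSet_Ico) (fun _ => measure_Ico_lt_top.ne),
    natCast_card_filter, mul_sum]
  refine sum_le_sum fun p _ => (volume_real_Ico_inter_Ico_le _ _ _).trans_eq ?_
  split_ifs <;> simp

end IntervalOverlaps

theorem mem_Ico_log_sub_log_two_iff {d : ℝ} (hd : 0 < d) (u : ℝ) :
    u ∈ Set.Ico (log d - log 2) (log d) ↔ exp u < d ∧ d ≤ 2 * exp u := by
  rw [Set.mem_Ico, ← lt_log_iff_exp_lt hd, ← log_le_log_iff hd (by positivity),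
    log_mul two_ne_zero (exp_ne_zero u), log_exp]
  constructor <;> rintro ⟨h₁, h₂⟩ <;> constructor <;> linarith

theorem tauI_eq_card_filter {a : ℕ} (ha : a ≠ 0) (y z : ℝ) :
    tauI a y z = #{d ∈ a.divisors | y < (d : ℕ) ∧ (d : ℕ) ≤ z} := by
  rw [tauI, ← Set.ncard_coe_finset]
  congr 1
  ext d
  simp [ha]

theorem W_eq_card_filter {a : ℕ} (ha : a ≠ 0) :
    W a = #{p ∈ a.divisors ×ˢ a.divisors | |log p.1 - log p.2| ≤ log 2} := by
  rw [W, ← Set.ncard_coe_finset]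
  congr 1
  ext p
  simp [ha, and_assoc]

theorem stmt6 (a : ℕ) (ha : 0 < a) :
    ∫ u : ℝ, ((tauI a (Real.exp u) (2 * Real.exp u) : ℝ)) ^ 2 ≤
      4 * Real.log 2 * (W a : ℝ) := by
  have htau : ∀ u, tauI a (exp u) (2 * exp u) =
      #{d ∈ a.divisors | u ∈ Set.Ico (log (d : ℕ) - log 2) (log (d : ℕ))} := fun u => by
    rw [tauI_eq_card_filter ha.ne']
    refine congrArg card (filter_congr fun d hd => ?_)
    exact (mem_Ico_log_sub_log_two_iff (Nat.cast_pos.mpr (Nat.pos_of_mem_divisors hd)) u).symm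
  calc ∫ u, (tauI a (exp u) (2 * exp u) : ℝ) ^ 2
      ≤ log 2 * W a := by
        simpa only [htau, W_eq_card_filter ha.ne'] using
          integral_sq_card_filter_mem_Ico_le a.divisors (fun d : ℕ => log d) (log 2)
    _ ≤ 4 * log 2 * W a := by
        have : 0 ≤ log 2 * W a := by positivity
        linarith
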